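/- arXiv:2408.00371 — 2 statements merged into one kernel-verified Lean document; each statement's English description precedes it below -/
import Mathlib

section
/- Let φ ∈ C∞_c(ℝⁿ) be supported in the ball B_ρ of radius ρ centered at the origin, and let φ̂ denote its Fourier transform. Then for every ξ ∈ ℝⁿ with ξ ≠ 0 and every j = 1,…,n, one has 2π|ξ_j| ∫₀^∞ |φ̂(tξ)| dt ≤ ρ⁻¹ ‖φ‖_{L¹(ℝⁿ)} + ρ ‖∂²_{x_j} φ‖_{L¹(ℝⁿ)}. -/
open MeasureTheory Real Set Complex

/-- Let `φ ∈ C∞_c(ℝⁿ)` be supported in the ball of radius `ρ`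
centered at the origin.  Then for every `ξ ≠ 0` and every coordinate direction `j`,
`2π|ξ_j| ∫₀^∞ |φ̂(tξ)| dt ≤ ρ⁻¹‖φ‖_{L¹} + ρ‖∂²_{x_j}φ‖_{L¹}`. -/
theorem statement8 {n : ℕ} (ρ : ℝ) (hρ : 0 < ρ)
    (φ : EuclideanSpace ℝ (Fin n) → ℂ)
    (hφ : ContDiff ℝ (⊤ : ℕ∞) φ) (hsupp : tsupport φ ⊆ Metric.closedBall 0 ρ)
    (ξ : EuclideanSpace ℝ (Fin n)) (hξ : ξ ≠ 0) (j : Fin n) :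
    2 * Real.pi * |ξ j| * ∫ t in Set.Ioi (0 : ℝ), ‖FourierTransform.fourier φ (t • ξ)‖
      ≤ ρ⁻¹ * (∫ x, ‖φ x‖)
        + ρ * ∫ x, ‖fderiv ℝ (fun y => fderiv ℝ φ y (EuclideanSpace.single j 1)) x
            (EuclideanSpace.single j 1)‖ := by
  set u : EuclideanSpace ℝ (Fin n) := EuclideanSpace.single j 1 with hu
  have hcs : HasCompactSupport φ :=
    (isCompact_closedBall 0 ρ).of_isClosed_subset (isClosed_tsupport φ) hsupp
  set g : EuclideanSpace ℝ (Fin n) → ℂ := fun y => fderiv ℝ φ y u with hgdef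
  have hg_smooth : ContDiff ℝ (⊤ : ℕ∞) g := (hφ.fderiv_right (by simp)).clm_apply contDiff_const
  have hg_cs : HasCompactSupport g := by
    have := hcs.fderiv (𝕜 := ℝ)
    exact this.comp_left (g := fun A : EuclideanSpace ℝ (Fin n) →L[ℝ] ℂ => A u) rfl
  have hφ_int : Integrable φ := hφ.continuous.integrable_of_hasCompactSupport hcs
  have hg_int : Integrable g := hg_smooth.continuous.integrable_of_hasCompactSupport hg_cs
  have hdφ_int : Integrable (fderiv ℝ φ) :=
    (hφ.continuous_fderiv (by simp)).integrable_of_hasCompactSupport (hcs.fderiv (𝕜 := ℝ))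
  have hdg_int : Integrable (fderiv ℝ g) :=
    (hg_smooth.continuous_fderiv (by simp)).integrable_of_hasCompactSupport (hg_cs.fderiv (𝕜 := ℝ))
  set h : EuclideanSpace ℝ (Fin n) → ℂ := fun x => fderiv ℝ g x u with hhdef
  have hh_smooth : ContDiff ℝ (⊤ : ℕ∞) h := (hg_smooth.fderiv_right (by simp)).clm_apply contDiff_const
  have hh_int : Integrable h := by
    exact hh_smooth.continuous.integrable_of_hasCompactSupport
      ((hg_cs.fderiv (𝕜 := ℝ)).comp_left (g := fun A : EuclideanSpace ℝ (Fin n) →L[ℝ] ℂ => A u) rfl)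
  -- norm identities
  have n1 : ∀ w, ‖FourierTransform.fourier g w‖
      = (2 * π) * |(inner ℝ w u : ℝ)| * ‖FourierTransform.fourier φ w‖ := by
    intro w
    have e1 : FourierTransform.fourier g w = FourierTransform.fourier (fderiv ℝ φ) w u :=
      (Real.fourier_continuousLinearMap_apply hdφ_int).symm
    rw [e1, Real.fourier_fderiv hφ_int (hφ.differentiable (by simp)) hdφ_int]
    simp only [VectorFourier.fourierSMulRight_apply, norm_smul]
    simp only [ContinuousLinearMap.neg_apply, innerSL_apply_apply, norm_neg, norm_mul,
      Complex.norm_ofNat, Complex.norm_real, Complex.norm_I, Real.norm_eq_abs,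
      _root_.abs_of_nonneg Real.pi_pos.le, mul_one]
    erw [innerSL_apply_apply]
    ring
  have n2 : ∀ w, ‖FourierTransform.fourier h w‖
      = (2 * π) * |(inner ℝ w u : ℝ)| * ‖FourierTransform.fourier g w‖ := by
    intro w
    have e1 : FourierTransform.fourier h w = FourierTransform.fourier (fderiv ℝ g) w u :=
      (Real.fourier_continuousLinearMap_apply hdg_int).symm
    rw [e1, Real.fourier_fderiv hg_int (hg_smooth.differentiable (by simp)) hdg_int]
    simp only [VectorFourier.fourierSMulRight_apply, norm_smul]
    simp only [ContinuousLinearMap.neg_apply, innerSL_apply_apply, norm_neg, norm_mul,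
      Complex.norm_ofNat, Complex.norm_real, Complex.norm_I, Real.norm_eq_abs,
      _root_.abs_of_nonneg Real.pi_pos.le, mul_one]
    erw [innerSL_apply_apply]
    ring
  have hinner : ∀ t : ℝ, (inner ℝ (t • ξ) u : ℝ) = t * ξ j := by
    intro t
    rw [hu, real_inner_smul_left]
    congr 1
    simp [EuclideanSpace.inner_single_right]
  have key : ∀ t : ℝ, ‖FourierTransform.fourier h (t • ξ)‖
      = (2 * π * |t| * |ξ j|) ^ 2 * ‖FourierTransform.fourier φ (t • ξ)‖ := by
    intro t
    rw [n2, n1, hinner, abs_mul]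
    ring
  set A := ∫ x, ‖φ x‖ with hA
  set B := ∫ x, ‖h x‖ with hB
  have hA0 : 0 ≤ A := integral_nonneg fun x => norm_nonneg _
  have hB0 : 0 ≤ B := integral_nonneg fun x => norm_nonneg _
  have bound1 : ∀ w, ‖FourierTransform.fourier φ w‖ ≤ A := fun w =>
    VectorFourier.norm_fourierIntegral_le_integral_norm _ _ _ _ _
  have boundh : ∀ w, ‖FourierTransform.fourier h w‖ ≤ B := fun w =>
    VectorFourier.norm_fourierIntegral_le_integral_norm _ _ _ _ _
  rcases eq_or_ne (ξ j) 0 with hj0 | hj0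
  · rw [hj0, abs_zero, mul_zero, zero_mul]
    positivity
  · have hc : (0:ℝ) < 2 * π * |ξ j| := by positivity
    set c := 2 * π * |ξ j| with hcdef
    have hcne : c ≠ 0 := hc.ne'
    have hρne : ρ ≠ 0 := hρ.ne'
    set T := (c * ρ)⁻¹ with hTdef
    have hT : 0 < T := by rw [hTdef]; positivity
    set C := B / c ^ 2 with hCdef
    have hC0 : 0 ≤ C := by rw [hCdef]; positivity
    set F := fun t : ℝ => ‖FourierTransform.fourier φ (t • ξ)‖ with hFdef
    have bound2 : ∀ t ∈ Set.Ioi T, F t ≤ C * t ^ (-2 : ℝ) := by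
      intro t ht
      have ht0 : 0 < t := lt_trans hT ht
      have h1 := boundh (t • ξ)
      rw [key t, abs_of_pos ht0] at h1
      have h2 : (2 * π * t * |ξ j|) ^ 2 = c ^ 2 * t ^ 2 := by rw [hcdef]; ring
      rw [h2] at h1
      have h3 : F t ≤ B / (c ^ 2 * t ^ 2) := by
        rw [le_div_iff₀ (by positivity), mul_comm]
        exact h1
      calc F t ≤ B / (c ^ 2 * t ^ 2) := h3
        _ = C * t ^ (-2 : ℝ) := by
            rw [hCdef, Real.rpow_neg ht0.le,
              show ((2:ℝ)) = ((2:ℕ):ℝ) from by norm_num, Real.rpow_natCast]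
            field_simp
    have Fcont : Continuous F := by
      apply Continuous.norm
      exact (VectorFourier.fourierIntegral_continuous Real.continuous_fourierChar
        (by exact continuous_inner) hφ_int).comp (continuous_id.smul continuous_const)
    have intOn1 : IntegrableOn F (Set.Ioc 0 T) :=
      (Fcont.integrableOn_Icc).mono_set Set.Ioc_subset_Icc_self
    have intBase : IntegrableOn (fun t => C * t ^ (-2:ℝ)) (Set.Ioi T) :=
      (integrableOn_Ioi_rpow_of_lt (by norm_num) hT).const_mul C
    have intOn2 : IntegrableOn F (Set.Ioi T) := by
      apply intBase.mono' Fcont.aestronglyMeasurable.restrict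
      filter_upwards [ae_restrict_mem measurableSet_Ioi] with t ht
      rw [Real.norm_eq_abs, _root_.abs_of_nonneg (norm_nonneg _)]
      exact bound2 t ht
    have split : ∫ t in Set.Ioi 0, F t = (∫ t in Set.Ioc 0 T, F t) + ∫ t in Set.Ioi T, F t := by
      rw [← setIntegral_union (Set.Ioc_disjoint_Ioi le_rfl) measurableSet_Ioi intOn1 intOn2,
        Set.Ioc_union_Ioi_eq_Ioi hT.le]
    have est1 : ∫ t in Set.Ioc 0 T, F t ≤ T * A := by
      calc ∫ t in Set.Ioc 0 T, F t ≤ ∫ _t in Set.Ioc 0 T, A :=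
            setIntegral_mono_on intOn1 (integrableOn_const measure_Ioc_lt_top.ne)
              measurableSet_Ioc fun t _ => bound1 _
        _ = T * A := by
            rw [setIntegral_const, Real.volume_real_Ioc, smul_eq_mul, sub_zero,
              max_eq_left hT.le]
    have est2 : ∫ t in Set.Ioi T, F t ≤ C * T⁻¹ := by
      calc ∫ t in Set.Ioi T, F t ≤ ∫ t in Set.Ioi T, C * t ^ (-2:ℝ) :=
            setIntegral_mono_on intOn2 intBase measurableSet_Ioi bound2
        _ = C * ∫ t in Set.Ioi T, t ^ (-2:ℝ) := by rw [integral_const_mul]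
        _ = C * T⁻¹ := by
            rw [integral_Ioi_rpow_of_lt (by norm_num) hT]
            norm_num [Real.rpow_neg_one]
    calc c * ∫ t in Set.Ioi 0, F t = c * ((∫ t in Set.Ioc 0 T, F t) + ∫ t in Set.Ioi T, F t) := by
          rw [split]
      _ ≤ c * (T * A + C * T⁻¹) := by
          exact mul_le_mul_of_nonneg_left (add_le_add est1 est2) hc.le
      _ = ρ⁻¹ * A + ρ * B := by
          rw [hTdef, hCdef]
          field_simp
end

section
/- Let Ω_{a,ε} = (−a,a) × (−ε,ε) ⊂ ℝ² and suppose u ∈ [H²₀(Ω_{a,ε})]² satisfies div u = x₁ on Ω_{a,ε}. Then ∫_{Ω_{a,ε}} x₁² dx = −½ ∫_{Ω_{a,ε}} x₂² ∂²_{x₂x₂} u₁ dx, and hence ‖x₁‖²_{0,Ω_{a,ε}} ≤ ½ ‖x₂²‖_{0,Ω_{a,ε}} ‖∂²_{x₂x₂} u₁‖_{0,Ω_{a,ε}}. -/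
/-!
Since `u` vanishes near the boundary of `Ω`, every integral may be taken over the whole plane and
integrated by parts without boundary terms. Multiplying `div u = x₁` by `x₁` gives
`∫ x₁² = ∫ x₁ ∂₁u₁ + ∫ x₁ ∂₂u₂ = -∫ u₁`, and integrating by parts twice in `x₂` against
`x₂² / 2` gives `∫ u₁ = ½ ∫ x₂² ∂²₂₂u₁`. The inequality then follows from Cauchy–Schwarz.
-/

open MeasureTheory Set Bornology

section IntegrationByParts

variable {E : Type*} [NormedAddCommGroup E] [NormedSpace ℝ E] [FiniteDimensional ℝ E]
  [MeasurableSpace E] [BorelSpace E] {μ : Measure E} [μ.IsAddHaarMeasure]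

theorem integral_mul_fderiv_eq_neg_fderiv_mul_of_hasCompactSupport {f g : E → ℝ}
    (hf : ContDiff ℝ 1 f) (hg : ContDiff ℝ 1 g) (hg_supp : HasCompactSupport g) (v : E) :
    ∫ x, f x * fderiv ℝ g x v ∂μ = -∫ x, fderiv ℝ f x v * g x ∂μ := by
  have hf' : Continuous (fderiv ℝ f · v) :=
    (hf.continuous_fderiv one_ne_zero).clm_apply continuous_const
  have hg' : Continuous (fderiv ℝ g · v) :=
    (hg.continuous_fderiv one_ne_zero).clm_apply continuous_const
  refine integral_mul_fderiv_eq_neg_fderiv_mul_of_integrable ?_ ?_ ?_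
    (fun x _ => hf.differentiable one_ne_zero x) (fun x _ => hg.differentiable one_ne_zero x)
  · exact (hf'.mul hg.continuous).integrable_of_hasCompactSupport hg_supp.mul_left
  · exact (hf.continuous.mul hg').integrable_of_hasCompactSupport
      (hg_supp.fderiv_apply ℝ v).mul_left
  · exact (hf.continuous.mul hg.continuous).integrable_of_hasCompactSupport hg_supp.mul_left

theorem integral_clm_mul_fderiv (ℓ : E →L[ℝ] ℝ) {g : E → ℝ} (hg : ContDiff ℝ 1 g)
    (hg_supp : HasCompactSupport g) (v : E) :
    ∫ x, ℓ x * fderiv ℝ g x v ∂μ = -(ℓ v * ∫ x, g x ∂μ) := by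
  simp only [integral_mul_fderiv_eq_neg_fderiv_mul_of_hasCompactSupport ℓ.contDiff hg hg_supp,
    ContinuousLinearMap.fderiv, integral_const_mul]

theorem integral_clm_sq_mul_fderiv_fderiv (ℓ : E →L[ℝ] ℝ) {g : E → ℝ} (hg : ContDiff ℝ 2 g)
    (hg_supp : HasCompactSupport g) (v : E) :
    ∫ x, ℓ x ^ 2 * fderiv ℝ (fderiv ℝ g · v) x v ∂μ = 2 * ℓ v ^ 2 * ∫ x, g x ∂μ := by
  have hg' : ContDiff ℝ 1 (fderiv ℝ g · v) :=
    (hg.fderiv_right (m := 1) le_rfl).clm_apply contDiff_const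
  have hℓ_sq : ∀ x, fderiv ℝ (fun y => ℓ y ^ 2) x v = 2 * ℓ v * ℓ x := fun x => by
    rw [(ℓ.hasFDerivAt.pow 2).fderiv]
    simp [mul_right_comm]
  calc ∫ x, ℓ x ^ 2 * fderiv ℝ (fderiv ℝ g · v) x v ∂μ
      = -∫ x, fderiv ℝ (fun y => ℓ y ^ 2) x v * fderiv ℝ g x v ∂μ :=
        integral_mul_fderiv_eq_neg_fderiv_mul_of_hasCompactSupport (ℓ.contDiff.pow 2) hg'
          (hg_supp.fderiv_apply ℝ v) v
    _ = -(2 * ℓ v) * ∫ x, ℓ x * fderiv ℝ g x v ∂μ := by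
        simp_rw [hℓ_sq, mul_assoc, integral_const_mul]; ring
    _ = 2 * ℓ v ^ 2 * ∫ x, g x ∂μ := by
        rw [integral_clm_mul_fderiv ℓ (hg.of_le one_le_two) hg_supp]; ring

end IntegrationByParts

theorem setIntegral_mul_fderiv_eq_integral {E : Type*} [NormedAddCommGroup E] [NormedSpace ℝ E]
    [MeasurableSpace E] {μ : Measure E} {f g : E → ℝ} {s : Set E} (hs : tsupport g ⊆ s)
    (v : E) : ∫ x in s, f x * fderiv ℝ g x v ∂μ = ∫ x, f x * fderiv ℝ g x v ∂μ :=
  setIntegral_eq_integral_of_forall_compl_eq_zero fun x hx => by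
    simp [fderiv_of_notMem_tsupport ℝ fun h => hx (hs h)]

theorem Continuous.integrableOn_of_isBounded {X E : Type*} [MetricSpace X] [ProperSpace X]
    [MeasurableSpace X] [OpensMeasurableSpace X] {μ : Measure X} [IsFiniteMeasureOnCompacts μ]
    [NormedAddCommGroup E] {F : X → E} (hF : Continuous F) {s : Set X} (hs : IsBounded s) :
    IntegrableOn F s μ :=
  (hF.continuousOn.integrableOn_compact hs.isCompact_closure).mono_set subset_closure

theorem abs_integral_mul_le_sqrt_integral_sq_mul_sqrt_integral_sq {α : Type*}
    [MeasurableSpace α] {μ : Measure α} {f g : α → ℝ} (hf : MemLp f 2 μ) (hg : MemLp g 2 μ) :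
    |∫ x, f x * g x ∂μ| ≤ √(∫ x, f x ^ 2 ∂μ) * √(∫ x, g x ^ 2 ∂μ) := by
  have h2 : ENNReal.ofReal 2 = 2 := by norm_num
  have hHolder := integral_mul_norm_le_Lp_mul_Lq (μ := μ) Real.HolderConjugate.two_two
    (h2 ▸ hf) (h2 ▸ hg)
  simp only [Real.norm_eq_abs, ← abs_mul, Real.rpow_two, sq_abs, ← Real.sqrt_eq_rpow] at hHolder
  exact (abs_integral_le_integral_abs).trans hHolder

theorem hasCompactSupport_of_tsupport_subset_of_isBounded {X α : Type*} [PseudoMetricSpace X]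
    [ProperSpace X] [Zero α] {f : X → α} {s : Set X} (hs : IsBounded s) (hf : tsupport f ⊆ s) :
    HasCompactSupport f :=
  hs.isCompact_closure.of_isClosed_subset (isClosed_tsupport f) (hf.trans subset_closure)

section Plane

variable {s : Set (ℝ × ℝ)}

theorem setIntegral_fst_sq_eq_neg_integral_of_div_eq_fst (hs : MeasurableSet s)
    (hs_bdd : IsBounded s) {u₁ u₂ : ℝ × ℝ → ℝ} (hu₁ : ContDiff ℝ 1 u₁) (hu₂ : ContDiff ℝ 1 u₂)
    (hu₁_supp : tsupport u₁ ⊆ s) (hu₂_supp : tsupport u₂ ⊆ s)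
    (hdiv : ∀ p ∈ s, fderiv ℝ u₁ p (1, 0) + fderiv ℝ u₂ p (0, 1) = p.1) :
    ∫ p in s, p.1 ^ 2 = -∫ p, u₁ p := by
  have hdu₁ : Continuous (fderiv ℝ u₁ · (1, 0)) :=
    (hu₁.continuous_fderiv one_ne_zero).clm_apply continuous_const
  have hdu₂ : Continuous (fderiv ℝ u₂ · (0, 1)) :=
    (hu₂.continuous_fderiv one_ne_zero).clm_apply continuous_const
  have h₁ : ∫ p, p.1 * fderiv ℝ u₁ p (1, 0) = -∫ p, u₁ p := by
    simpa using integral_clm_mul_fderiv (ContinuousLinearMap.fst ℝ ℝ ℝ) hu₁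
      (hasCompactSupport_of_tsupport_subset_of_isBounded hs_bdd hu₁_supp) (1, 0)
  have h₂ : ∫ p, p.1 * fderiv ℝ u₂ p (0, 1) = 0 := by
    simpa using integral_clm_mul_fderiv (ContinuousLinearMap.fst ℝ ℝ ℝ) hu₂
      (hasCompactSupport_of_tsupport_subset_of_isBounded hs_bdd hu₂_supp) (0, 1)
  calc ∫ p in s, p.1 ^ 2
      = ∫ p in s, p.1 * fderiv ℝ u₁ p (1, 0) + p.1 * fderiv ℝ u₂ p (0, 1) :=
        setIntegral_congr_fun hs fun p hp => by rw [← mul_add, hdiv p hp, sq]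
    _ = (∫ p in s, p.1 * fderiv ℝ u₁ p (1, 0)) + ∫ p in s, p.1 * fderiv ℝ u₂ p (0, 1) :=
        integral_add (f := fun p => p.1 * fderiv ℝ u₁ p (1, 0))
          (g := fun p => p.1 * fderiv ℝ u₂ p (0, 1))
          ((continuous_fst.mul hdu₁).integrableOn_of_isBounded hs_bdd)
          ((continuous_fst.mul hdu₂).integrableOn_of_isBounded hs_bdd)
    _ = -∫ p, u₁ p := by
        rw [setIntegral_mul_fderiv_eq_integral hu₁_supp,
          setIntegral_mul_fderiv_eq_integral hu₂_supp, h₁, h₂, add_zero]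

theorem setIntegral_snd_sq_mul_fderiv_fderiv_eq_two_mul_integral (hs_bdd : IsBounded s)
    {g : ℝ × ℝ → ℝ} (hg : ContDiff ℝ 2 g) (hg_supp : tsupport g ⊆ s) :
    ∫ p in s, p.2 ^ 2 * fderiv ℝ (fderiv ℝ g · (0, 1)) p (0, 1) = 2 * ∫ p, g p := by
  rw [setIntegral_mul_fderiv_eq_integral ((tsupport_fderiv_apply_subset ℝ _).trans hg_supp)]
  simpa using integral_clm_sq_mul_fderiv_fderiv (ContinuousLinearMap.snd ℝ ℝ ℝ) hg
    (hasCompactSupport_of_tsupport_subset_of_isBounded hs_bdd hg_supp) (0, 1)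

end Plane

theorem statement11_general (a ε : ℝ)
    (u : ℝ × ℝ → ℝ × ℝ) (hreg : ContDiff ℝ 2 u)
    (hsupp : tsupport u ⊆ Set.Ioo (-a) a ×ˢ Set.Ioo (-ε) ε)
    (hdiv : ∀ p ∈ (Set.Ioo (-a) a ×ˢ Set.Ioo (-ε) ε : Set (ℝ × ℝ)),
      fderiv ℝ (fun q => (u q).1) p ((1 : ℝ), (0 : ℝ))
        + fderiv ℝ (fun q => (u q).2) p ((0 : ℝ), (1 : ℝ)) = p.1) :
    (∫ p in (Set.Ioo (-a) a ×ˢ Set.Ioo (-ε) ε : Set (ℝ × ℝ)), p.1^2)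
      = -(1/2) * ∫ p in (Set.Ioo (-a) a ×ˢ Set.Ioo (-ε) ε : Set (ℝ × ℝ)),
          p.2^2 * fderiv ℝ (fun q => fderiv ℝ (fun r => (u r).1) q ((0:ℝ),(1:ℝ))) p ((0:ℝ),(1:ℝ))
    ∧ (∫ p in (Set.Ioo (-a) a ×ˢ Set.Ioo (-ε) ε : Set (ℝ × ℝ)), p.1^2)
      ≤ (1/2) * Real.sqrt (∫ p in (Set.Ioo (-a) a ×ˢ Set.Ioo (-ε) ε : Set (ℝ × ℝ)), (p.2^2)^2)
          * Real.sqrt (∫ p in (Set.Ioo (-a) a ×ˢ Set.Ioo (-ε) ε : Set (ℝ × ℝ)),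
              (fderiv ℝ (fun q => fderiv ℝ (fun r => (u r).1) q ((0:ℝ),(1:ℝ))) p ((0:ℝ),(1:ℝ)))^2) := by
  set Ω : Set (ℝ × ℝ) := Ioo (-a) a ×ˢ Ioo (-ε) ε
  set D : ℝ × ℝ → ℝ := (fderiv ℝ (fderiv ℝ (fun r => (u r).1) · (0, 1)) · (0, 1))
  have hΩ : IsBounded Ω := (Metric.isBounded_Ioo _ _).prod (Metric.isBounded_Ioo _ _)
  have hu₁ : ContDiff ℝ 2 fun r => (u r).1 := contDiff_fst.comp hreg
  have hu₁_supp : tsupport (fun r => (u r).1) ⊆ Ω := (tsupport_comp_subset rfl u).trans hsupp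
  have hu₂_supp : tsupport (fun r => (u r).2) ⊆ Ω := (tsupport_comp_subset rfl u).trans hsupp
  have key : ∫ p in Ω, p.1 ^ 2 = -(1 / 2) * ∫ p in Ω, p.2 ^ 2 * D p := by
    rw [setIntegral_fst_sq_eq_neg_integral_of_div_eq_fst
      (measurableSet_Ioo.prod measurableSet_Ioo) hΩ (hu₁.of_le one_le_two)
      ((contDiff_snd.comp hreg).of_le one_le_two) hu₁_supp hu₂_supp hdiv,
      setIntegral_snd_sq_mul_fderiv_fderiv_eq_two_mul_integral hΩ hu₁ hu₁_supp]
    ring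
  have hD : Continuous D :=
    (((hu₁.fderiv_right (m := 1) le_rfl).clm_apply contDiff_const).continuous_fderiv
      one_ne_zero).clm_apply continuous_const
  have hmemLp : ∀ F : ℝ × ℝ → ℝ, Continuous F → MemLp F 2 (volume.restrict Ω) := fun F hF =>
    (memLp_two_iff_integrable_sq hF.aestronglyMeasurable).2
      ((hF.pow 2).integrableOn_of_isBounded hΩ)
  refine ⟨key, ?_⟩
  calc ∫ p in Ω, p.1 ^ 2 ≤ 1 / 2 * |∫ p in Ω, p.2 ^ 2 * D p| := by
        rw [key]; linarith [neg_abs_le (∫ p in Ω, p.2 ^ 2 * D p)]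
    _ ≤ 1 / 2 * (√(∫ p in Ω, (p.2 ^ 2) ^ 2) * √(∫ p in Ω, D p ^ 2)) := by
        gcongr
        exact abs_integral_mul_le_sqrt_integral_sq_mul_sqrt_integral_sq
          (hmemLp _ (continuous_snd.pow 2)) (hmemLp _ hD)
    _ = _ := by ring

/-- Let `Ω_{a,ε} = (−a,a) × (−ε,ε) ⊂ ℝ²` and let
`u = (u₁,u₂) ∈ [H²₀(Ω_{a,ε})]²` (represented here by a `C²` vector field supported
in `Ω_{a,ε}`) satisfy `div u = x₁` on `Ω_{a,ε}`.  Then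
`∫ x₁² = −½ ∫ x₂² ∂²_{x₂x₂}u₁`, and hence by Cauchy–Schwarz
`‖x₁‖² ≤ ½‖x₂²‖‖∂²_{x₂x₂}u₁‖`. -/
theorem statement11 (a ε : ℝ) (ha : 0 < a) (hε : 0 < ε)
    (u : ℝ × ℝ → ℝ × ℝ) (hreg : ContDiff ℝ 2 u)
    (hsupp : tsupport u ⊆ Set.Ioo (-a) a ×ˢ Set.Ioo (-ε) ε)
    (hdiv : ∀ p ∈ (Set.Ioo (-a) a ×ˢ Set.Ioo (-ε) ε : Set (ℝ × ℝ)),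
      fderiv ℝ (fun q => (u q).1) p ((1 : ℝ), (0 : ℝ))
        + fderiv ℝ (fun q => (u q).2) p ((0 : ℝ), (1 : ℝ)) = p.1) :
    (∫ p in (Set.Ioo (-a) a ×ˢ Set.Ioo (-ε) ε : Set (ℝ × ℝ)), p.1^2)
      = -(1/2) * ∫ p in (Set.Ioo (-a) a ×ˢ Set.Ioo (-ε) ε : Set (ℝ × ℝ)),
          p.2^2 * fderiv ℝ (fun q => fderiv ℝ (fun r => (u r).1) q ((0:ℝ),(1:ℝ))) p ((0:ℝ),(1:ℝ))
    ∧ (∫ p in (Set.Ioo (-a) a ×ˢ Set.Ioo (-ε) ε : Set (ℝ × ℝ)), p.1^2)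
      ≤ (1/2) * Real.sqrt (∫ p in (Set.Ioo (-a) a ×ˢ Set.Ioo (-ε) ε : Set (ℝ × ℝ)), (p.2^2)^2)
          * Real.sqrt (∫ p in (Set.Ioo (-a) a ×ˢ Set.Ioo (-ε) ε : Set (ℝ × ℝ)),
              (fderiv ℝ (fun q => fderiv ℝ (fun r => (u r).1) q ((0:ℝ),(1:ℝ))) p ((0:ℝ),(1:ℝ)))^2) :=
  statement11_general a ε u hreg hsupp hdiv
end
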